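/- Let Δ ≥ 2, let G be a connected infinite Δ-regular graph, and let 0 < q < 1 and r > 0. Suppose (S_AB, S_B) is a blocking structure for (G, q, r) with S_AB = ∅ (hence S_B ≠ ∅) and S_B ≠ V(G). Then q > 1/Δ and q + Δr > 1. -/

import Mathlib

namespace Contagion

open scoped BigOperators

/-- The three strategies in the contagion game. -/
inductive Strat
  | A | B | AB
deriving DecidableEq

/-- Pairwise payoff to a player using the first strategy against a neighbor
using the second strategy, in the contagion game with parameters `q, r`. -/
noncomputable def pairPayoff (q r : ℝ) : Strat → Strat → ℝ
  | .A, .A => 1 - q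
  | .A, .B => 0
  | .A, .AB => 1 - q
  | .B, .A => 0
  | .B, .B => q
  | .B, .AB => q
  | .AB, .A => 1 - q - r
  | .AB, .B => q - r
  | .AB, .AB => max q (1 - q) - r

variable {V : Type*}

/-- Total payoff to vertex `v` for playing strategy `s` against profile `σ`. -/
noncomputable def totalPayoff (G : SimpleGraph V) (q r : ℝ) (σ : V → Strat)
    (v : V) (s : Strat) : ℝ :=
  ∑ᶠ u ∈ G.neighborSet v, pairPayoff q r s (σ u)

/-- `s` is a best response of vertex `v` to the profile `σ`. -/
def IsBestResponse (G : SimpleGraph V) (q r : ℝ) (σ : V → Strat) (v : V) (s : Strat) : Prop :=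
  ∀ s' : Strat, totalPayoff G q r σ v s' ≤ totalPayoff G q r σ v s

/-- Strategy `A` becomes epidemic in the contagion game `(G, q, r)`:
there are a finite initial set `S₀` (playing `A`, everybody else playing `B`) and a
sequence `α` of vertices in which every vertex appears at least once, such that updating
at step `n` the vertex `α n` to a best response makes every vertex eventually adopt `A`. -/
def Epidemic (G : SimpleGraph V) (q r : ℝ) : Prop :=
  ∃ (S₀ : Set V) (α : ℕ → V) (σ : ℕ → V → Strat),
    S₀.Finite ∧
    Function.Surjective α ∧
    (∀ v ∈ S₀, σ 0 v = Strat.A) ∧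
    (∀ v ∉ S₀, σ 0 v = Strat.B) ∧
    (∀ n, IsBestResponse G q r (σ n) (α n) (σ (n + 1) (α n))) ∧
    (∀ n v, v ≠ α n → σ (n + 1) v = σ n v) ∧
    (∀ v, ∃ n, σ n v = Strat.A)

/-- The epidemic region `Ω_G ⊆ ℝ²` of `G`. -/
def epidemicRegion (G : SimpleGraph V) : Set (ℝ × ℝ) :=
  {p | 0 < p.1 ∧ p.1 < 1 ∧ 0 < p.2 ∧ Epidemic G p.1 p.2}

/-- `G` is `Δ`-regular: every vertex has exactly `Δ` neighbors. -/
def IsRegular (G : SimpleGraph V) (Δ : ℕ) : Prop :=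
  ∀ v, (G.neighborSet v).ncard = Δ

/-- The number of neighbors of `v` lying in the set `S`. -/
noncomputable def degIn (G : SimpleGraph V) (v : V) (S : Set V) : ℕ :=
  (G.neighborSet v ∩ S).ncard

/-- `RT Δ`: the infinite rooted tree in which the root (the empty list) has `Δ - 1`
children and every other vertex also has `Δ - 1` children (hence degree `Δ`). -/
def RT (Δ : ℕ) : SimpleGraph (List (Fin (Δ - 1))) :=
  SimpleGraph.fromRel (fun l l' => ∃ a : Fin (Δ - 1), l' = a :: l)

/-- `G` contains a subgraph isomorphic to `RT Δ`. -/
def HasRTCopy (Δ : ℕ) (G : SimpleGraph V) : Prop :=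
  ∃ f : List (Fin (Δ - 1)) → V,
    Function.Injective f ∧ ∀ x y, (RT Δ).Adj x y → G.Adj (f x) (f y)

/-- The thick half line `HL_Δ` (for even `Δ`), columns indexed by `ℕ` starting with the
first column `0`; `(k, i)` and `(l, j)` are adjacent exactly when `|k - l| = 1`. -/
def HL (Δ : ℕ) : SimpleGraph (ℕ × Fin (Δ / 2)) :=
  SimpleGraph.fromRel (fun x y => y.1 = x.1 + 1)

/-- The epidemic region of the infinite `Δ`-regular tree:
`{(q,r) : q,r > 0, r ≥ ((Δ-1)/Δ)q, q ≤ 1/Δ} ∪ {(q,r) : q,r > 0, 2q + Δr ≤ 1}`. -/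
def treeRegion (Δ : ℕ) : Set (ℝ × ℝ) :=
  {p | 0 < p.1 ∧ 0 < p.2 ∧ ((Δ : ℝ) - 1) / Δ * p.1 ≤ p.2 ∧ p.1 ≤ 1 / Δ} ∪
  {p | 0 < p.1 ∧ 0 < p.2 ∧ 2 * p.1 + Δ * p.2 ≤ 1}

/-- The epidemic region of the thick line `L_Δ`:
`{(q,r) : 0 < q ≤ 1/2, r ≥ q/2} ∪ {(q,r) : q,r > 0, r ≤ q/2, 2q + 2r ≤ 1}`. -/
def thickLineRegion : Set (ℝ × ℝ) :=
  {p | 0 < p.1 ∧ p.1 ≤ 1 / 2 ∧ p.1 / 2 ≤ p.2} ∪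
  {p | 0 < p.1 ∧ 0 < p.2 ∧ p.2 ≤ p.1 / 2 ∧ 2 * p.1 + 2 * p.2 ≤ 1}

/-- `(SAB, SB)` is a blocking structure for the contagion game `(G, q, r)`
on a `Δ`-regular graph `G`. -/
def IsBlockingStructure (G : SimpleGraph V) (Δ : ℕ) (q r : ℝ) (SAB SB : Set V) : Prop :=
  Disjoint SAB SB ∧ (SAB.Nonempty ∨ SB.Nonempty) ∧
  (∀ v ∈ SAB, r / q * Δ < (degIn G v SB : ℝ)) ∧
  ∀ v ∈ SB,
    (1 - q - r) * Δ < (1 - q) * (degIn G v SB : ℝ) + min q (1 - q) * (degIn G v SAB : ℝ) ∧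
    (1 - q) * Δ < (degIn G v SB : ℝ) + q * (degIn G v SAB : ℝ)

/-- The two strategies of the `A`-`B` coordination game. -/
inductive CStrat
  | A | B
deriving DecidableEq

/-- Pairwise payoff in the `A`-`B` coordination game `(G, q)`. -/
noncomputable def cPairPayoff (q : ℝ) : CStrat → CStrat → ℝ
  | .A, .A => 1 - q
  | .A, .B => 0
  | .B, .A => 0
  | .B, .B => q

/-- Total payoff to `v` for playing `s` against profile `σ` in the coordination game. -/
noncomputable def cTotalPayoff (G : SimpleGraph V) (q : ℝ) (σ : V → CStrat)
    (v : V) (s : CStrat) : ℝ :=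
  ∑ᶠ u ∈ G.neighborSet v, cPairPayoff q s (σ u)

/-- `s` is a best response of `v` to `σ` in the coordination game. -/
def CIsBestResponse (G : SimpleGraph V) (q : ℝ) (σ : V → CStrat) (v : V) (s : CStrat) : Prop :=
  ∀ s' : CStrat, cTotalPayoff G q σ v s' ≤ cTotalPayoff G q σ v s

/-- Strategy `A` becomes epidemic in the coordination game `(G, q)` starting from the
initial set `S₀`. -/
def CoordEpidemicFrom (G : SimpleGraph V) (q : ℝ) (S₀ : Set V) : Prop :=
  ∃ (α : ℕ → V) (σ : ℕ → V → CStrat),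
    Function.Surjective α ∧
    (∀ v ∈ S₀, σ 0 v = CStrat.A) ∧
    (∀ v ∉ S₀, σ 0 v = CStrat.B) ∧
    (∀ n, CIsBestResponse G q (σ n) (α n) (σ (n + 1) (α n))) ∧
    (∀ n v, v ≠ α n → σ (n + 1) v = σ n v) ∧
    (∀ v, ∃ n, σ n v = CStrat.A)

/-- Strategy `A` becomes epidemic in the coordination game `(G, q)`. -/
def CoordEpidemic (G : SimpleGraph V) (q : ℝ) : Prop :=
  ∃ S₀ : Set V, S₀.Finite ∧ CoordEpidemicFrom G q S₀

/-!
Since `S_B` is a nonempty proper subset of the connected graph `G`, some `v ∈ S_B` has a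
neighbour outside `S_B`, so `d := deg_{S_B}(v) ≤ Δ - 1`. With `S_AB = ∅` the two conditions
at `v` read `(1 - q)Δ < d` and `(1 - q - r)Δ < (1 - q)d`; substituting `d ≤ Δ - 1` gives
`qΔ > 1` and `q + Δr > 1`.
-/

lemma _root_.SimpleGraph.Connected.exists_adj_mem_notMem {G : SimpleGraph V} (hConn : G.Connected)
    {S : Set V} (hne : S.Nonempty) (hS : S ≠ Set.univ) :
    ∃ v ∈ S, ∃ u, G.Adj v u ∧ u ∉ S := by
  obtain ⟨a, ha⟩ := hne
  obtain ⟨b, hb⟩ := (Set.ne_univ_iff_exists_notMem S).mp hS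
  obtain ⟨d, -, hd, hd'⟩ := (hConn a b).some.exists_boundary_dart S ha hb
  exact ⟨d.fst, hd, d.snd, d.adj, hd'⟩

-- An infinite neighbourhood has `ncard = 0`, so `Δ ≠ 0` is what makes neighbourhoods finite.
lemma degIn_lt_of_adj_of_notMem {G : SimpleGraph V} {Δ : ℕ} (hReg : IsRegular G Δ)
    (hΔ : Δ ≠ 0) {S : Set V} {v u : V} (hadj : G.Adj v u) (hu : u ∉ S) :
    degIn G v S < Δ := by
  rw [← hReg v]
  have hfin : (G.neighborSet v).Finite := Set.finite_of_ncard_ne_zero (by rwa [hReg v])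
  exact Set.ncard_lt_ncard
    ⟨Set.inter_subset_left, fun hsub => hu (hsub (G.mem_neighborSet v u |>.mpr hadj)).2⟩ hfin

lemma IsBlockingStructure.degIn_bounds_of_left_eq_empty {G : SimpleGraph V} {Δ : ℕ} {q r : ℝ}
    {SAB SB : Set V} (hblock : IsBlockingStructure G Δ q r SAB SB) (hSAB : SAB = ∅)
    {v : V} (hv : v ∈ SB) :
    (1 - q - r) * Δ < (1 - q) * degIn G v SB ∧ (1 - q) * Δ < degIn G v SB := by
  simpa [degIn, hSAB] using hblock.2.2.2 v hv

lemma IsBlockingStructure.nonempty_right_of_left_eq_empty {G : SimpleGraph V} {Δ : ℕ} {q r : ℝ}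
    {SAB SB : Set V} (hblock : IsBlockingStructure G Δ q r SAB SB) (hSAB : SAB = ∅) :
    SB.Nonempty :=
  hblock.2.1.resolve_left (by simp [hSAB])

lemma constraints_of_degree_le {Δ d q r : ℝ} (hΔ : 0 < Δ) (hq1 : q < 1) (hd : d ≤ Δ - 1)
    (h₁ : (1 - q - r) * Δ < (1 - q) * d) (h₂ : (1 - q) * Δ < d) :
    1 / Δ < q ∧ 1 < q + Δ * r := by
  have hdq : (1 - q) * d ≤ (1 - q) * (Δ - 1) := mul_le_mul_of_nonneg_left hd (by linarith)
  refine ⟨?_, by nlinarith⟩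
  rw [div_lt_iff₀ hΔ]
  linarith

theorem blocking_empty_SAB_constraints_general {V : Type*} (Δ : ℕ) (hΔ : 2 ≤ Δ)
    (G : SimpleGraph V) (hConn : G.Connected) (hReg : IsRegular G Δ)
    (q r : ℝ) (hq1 : q < 1)
    (SAB SB : Set V) (hblock : IsBlockingStructure G Δ q r SAB SB)
    (hSAB : SAB = ∅) (hSB : SB ≠ Set.univ) :
    1 / (Δ : ℝ) < q ∧ 1 < q + Δ * r := by
  obtain ⟨v, hv, u, hadj, hu⟩ :=
    hConn.exists_adj_mem_notMem (hblock.nonempty_right_of_left_eq_empty hSAB) hSB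
  have hlt : degIn G v SB < Δ := degIn_lt_of_adj_of_notMem hReg (by omega) hadj hu
  have hd : (degIn G v SB : ℝ) ≤ Δ - 1 := by
    rw [le_sub_iff_add_le]
    exact_mod_cast hlt
  obtain ⟨h₁, h₂⟩ := hblock.degIn_bounds_of_left_eq_empty hSAB hv
  exact constraints_of_degree_le (by positivity) hq1 hd h₁ h₂

/-- If `(S_AB, S_B)` is a blocking structure for `(G, q, r)` on a connected
infinite `Δ`-regular graph with `S_AB = ∅` and `S_B ≠ V(G)`, then `q > 1/Δ` and
`q + Δr > 1`. -/
theorem blocking_empty_SAB_constraints {V : Type*} (Δ : ℕ) (hΔ : 2 ≤ Δ)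
    (G : SimpleGraph V) (hInf : Infinite V) (hConn : G.Connected) (hReg : IsRegular G Δ)
    (q r : ℝ) (hq0 : 0 < q) (hq1 : q < 1) (hr : 0 < r)
    (SAB SB : Set V) (hblock : IsBlockingStructure G Δ q r SAB SB)
    (hSAB : SAB = ∅) (hSB : SB ≠ Set.univ) :
    1 / (Δ : ℝ) < q ∧ 1 < q + Δ * r :=
  blocking_empty_SAB_constraints_general Δ hΔ G hConn hReg q r hq1 SAB SB hblock hSAB hSB

end Contagion
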